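/- arXiv:1809.04886 — 5 statements merged into one kernel-verified Lean document; each statement's English description precedes it below -/
import Mathlib

section
/- Let (X, 𝒜, μ) be a measure space with μ a finite measure, and let f : X → ℝ be measurable with μ({x : f(x) = 0}) = 0. Then there exists a function Ψ : [0,∞) → [0,∞) which is concave on [0,∞), continuous, strictly monotonically increasing, satisfies Ψ(0) = 0 and Ψ(ε) → ∞ as ε → ∞, and such that (μ({x : |f(x)| ≤ ε})).toReal ≤ Ψ(ε) for every ε > 0. -/
open MeasureTheory Filter Set

/-!
Wherever `f x ≠ 0`, hence `μ`-a.e., the indicator of `{|f| ≤ ε}` is dominated by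
`min 1 (ε / |f x|)`. As a function of `ε` this profile is a minimum of two affine functions,
so it is concave, continuous and monotone on `[0, ∞)`; being bounded by `1`, its integral
against the finite measure `μ` inherits these properties and vanishes at `ε = 0`. Adding `ε`
makes the integral strictly increasing and unbounded.
-/

lemma concaveOn_min_one_div {s : Set ℝ} (hs : Convex ℝ s) (a : ℝ) :
    ConcaveOn ℝ s fun ε => min 1 (ε / a) :=
  (concaveOn_const (1 : ℝ) hs).inf ((LinearMap.mulRight ℝ a⁻¹).concaveOn hs)

lemma monotone_min_one_div {a : ℝ} (ha : 0 ≤ a) : Monotone fun ε : ℝ => min 1 (ε / a) :=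
  fun _ _ h => min_le_min_left 1 (div_le_div_of_nonneg_right h ha)

lemma min_one_div_nonneg {a ε : ℝ} (ha : 0 ≤ a) (hε : 0 ≤ ε) : 0 ≤ min 1 (ε / a) :=
  le_min zero_le_one (div_nonneg hε ha)

lemma abs_min_one_div_le_one {a ε : ℝ} (ha : 0 ≤ a) (hε : 0 ≤ ε) : |min 1 (ε / a)| ≤ 1 :=
  (abs_of_nonneg (min_one_div_nonneg ha hε)).trans_le (min_le_left _ _)

/-- A smoothing of `ε ↦ μ.real {x | |f x| ≤ ε}`. -/
noncomputable def softLevelMeasure {X : Type*} [MeasurableSpace X] (μ : Measure X) (f : X → ℝ)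
    (ε : ℝ) : ℝ :=
  ∫ x, min 1 (ε / |f x|) ∂μ

namespace softLevelMeasure

variable {X : Type*} [MeasurableSpace X] {μ : Measure X} {f : X → ℝ}

lemma zero : softLevelMeasure μ f 0 = 0 := by
  simp [softLevelMeasure]

lemma nonneg {ε : ℝ} (hε : 0 ≤ ε) : 0 ≤ softLevelMeasure μ f ε :=
  integral_nonneg fun x => min_one_div_nonneg (abs_nonneg (f x)) hε

variable [IsFiniteMeasure μ] (hf : Measurable f)
include hf

lemma integrable_integrand {ε : ℝ} (hε : 0 ≤ ε) :
    Integrable (fun x => min 1 (ε / |f x|)) μ :=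
  Integrable.of_bound (measurable_const.min (measurable_const.div hf.abs)).aestronglyMeasurable 1
    (ae_of_all _ fun x => abs_min_one_div_le_one (abs_nonneg (f x)) hε)

lemma concaveOn : ConcaveOn ℝ (Ici 0) (softLevelMeasure μ f) :=
  integral_concaveOn_of_integrand_ae (f := fun x ε => min 1 (ε / |f x|)) (convex_Ici 0)
    (ae_of_all _ fun x => concaveOn_min_one_div (convex_Ici 0) |f x|)
    fun _ hε => integrable_integrand hf hε

lemma monotoneOn : MonotoneOn (softLevelMeasure μ f) (Ici 0) :=
  integral_monotoneOn_of_integrand_ae (f := fun x ε => min 1 (ε / |f x|))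
    (ae_of_all _ fun x => (monotone_min_one_div (abs_nonneg (f x))).monotoneOn _)
    fun _ hε => integrable_integrand hf hε

lemma continuousOn : ContinuousOn (softLevelMeasure μ f) (Ici 0) :=
  continuousOn_of_dominated
    (fun _ _ => (measurable_const.min (measurable_const.div hf.abs)).aestronglyMeasurable)
    (fun _ hε => ae_of_all _ fun x => abs_min_one_div_le_one (abs_nonneg (f x)) hε)
    (integrable_const 1)
    (ae_of_all _ fun _ => (continuous_const.min (continuous_id.div_const _)).continuousOn)

lemma measureReal_abs_le_le (h0 : μ {x | f x = 0} = 0) {ε : ℝ} (hε : 0 < ε) :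
    μ.real {x | |f x| ≤ ε} ≤ softLevelMeasure μ f ε := by
  have hsub : {x | |f x| ≤ ε} ≤ᵐ[μ] {x | 1 ≤ min 1 (ε / |f x|)} := by
    filter_upwards [measure_eq_zero_iff_ae_notMem.1 h0] with x (hx : f x ≠ 0) (hxε : |f x| ≤ ε)
    exact le_min le_rfl ((one_le_div (abs_pos.2 hx)).2 hxε)
  calc μ.real {x | |f x| ≤ ε} ≤ μ.real {x | 1 ≤ min 1 (ε / |f x|)} :=
        ENNReal.toReal_mono (measure_ne_top _ _) (measure_mono_ae hsub)
    _ ≤ softLevelMeasure μ f ε :=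
        (one_mul _).symm.trans_le <| mul_meas_ge_le_integral_of_nonneg
          (ae_of_all _ fun x => min_one_div_nonneg (abs_nonneg (f x)) hε.le)
          (integrable_integrand hf hε.le) 1

end softLevelMeasure

/-- Proposition 3.4: under the nodal set condition `μ {f = 0} = 0`, there exists a
concave, continuous, strictly increasing modulus `Ψ : [0,∞) → [0,∞)` with `Ψ 0 = 0`
and `Ψ → ∞` bounding the level-set measures `μ {|f| ≤ ε}`. -/
theorem structural_modulus_exists
    {X : Type*} [MeasurableSpace X] (μ : Measure X) [IsFiniteMeasure μ]
    (f : X → ℝ) (hf : Measurable f) (h0 : μ {x | f x = 0} = 0) :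
    ∃ Ψ : ℝ → ℝ,
      ConcaveOn ℝ (Set.Ici 0) Ψ ∧
      ContinuousOn Ψ (Set.Ici 0) ∧
      StrictMonoOn Ψ (Set.Ici 0) ∧
      (∀ x ∈ Set.Ici (0 : ℝ), 0 ≤ Ψ x) ∧
      Ψ 0 = 0 ∧
      Tendsto Ψ atTop atTop ∧
      ∀ ε > (0 : ℝ), (μ {x | |f x| ≤ ε}).toReal ≤ Ψ ε := by
  refine ⟨fun ε => ε + softLevelMeasure μ f ε, ?_, ?_, ?_, ?_, ?_, ?_, ?_⟩
  · exact (concaveOn_id (convex_Ici 0)).add (softLevelMeasure.concaveOn hf)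
  · exact continuousOn_id.add (softLevelMeasure.continuousOn hf)
  · exact strictMonoOn_id.add_monotone (softLevelMeasure.monotoneOn hf)
  · exact fun ε hε => add_nonneg hε (softLevelMeasure.nonneg hε)
  · simp [softLevelMeasure.zero]
  · exact tendsto_id.atTop_add_zero_eventuallyLE
      ((eventually_ge_atTop 0).mono fun ε hε => softLevelMeasure.nonneg hε)
  · exact fun ε hε => (softLevelMeasure.measureReal_abs_le_le hf h0 hε).trans
      (le_add_of_nonneg_left hε.le)
end

section
/- Let Φ : [0,∞) → ℝ be bounded with Φ(ε) ≥ 0 for all ε ≥ 0, Φ(0) = 0, and Φ(ε) → 0 as ε → 0 within (0, ∞). Define its concave hull Φ̃ : [0,∞) → ℝ by Φ̃(x) = inf_{γ ≥ 0} [ x·γ + sup_{ε' ≥ 0} (Φ(ε') − ε'·γ) ]. Then Φ̃ is concave on [0,∞), Φ̃(x) ≥ Φ(x) for all x ≥ 0, and Φ̃(0) = 0. -/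
open Filter Set

/-- Key step in the proof of Proposition 3.4: the concave hull
`Φ̃ x = inf_{γ ≥ 0} [xγ + sup_{ε' ≥ 0} (Φ ε' − ε' γ)]` of a bounded nonnegative
function `Φ` with `Φ 0 = 0` and `Φ(ε) → 0` as `ε → 0⁺` is concave on `[0,∞)`,
dominates `Φ` there, and satisfies `Φ̃ 0 = 0`. -/
theorem concave_hull_of_level_set_function
    (Φ : ℝ → ℝ)
    (hbdd : ∃ M : ℝ, ∀ ε ≥ (0 : ℝ), Φ ε ≤ M)
    (hnonneg : ∀ ε ≥ (0 : ℝ), 0 ≤ Φ ε)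
    (h0 : Φ 0 = 0)
    (hlim : Tendsto Φ (nhdsWithin 0 (Set.Ioi 0)) (nhds 0))
    (Φt : ℝ → ℝ)
    (hΦt : ∀ x : ℝ, Φt x =
      sInf {y : ℝ | ∃ γ ≥ (0 : ℝ),
        y = x * γ + sSup {z : ℝ | ∃ ε' ≥ (0 : ℝ), z = Φ ε' - ε' * γ}}) :
    ConcaveOn ℝ (Set.Ici 0) Φt ∧ (∀ x ≥ (0 : ℝ), Φ x ≤ Φt x) ∧ Φt 0 = 0 := by
  obtain ⟨M, hM⟩ := hbdd
  have hM0 : (0:ℝ) ≤ M := le_trans (hnonneg 0 le_rfl) (hM 0 le_rfl)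
  set S : ℝ → Set ℝ := fun γ => {z : ℝ | ∃ ε' ≥ (0:ℝ), z = Φ ε' - ε' * γ} with hS
  set g : ℝ → ℝ := fun γ => sSup (S γ) with hg
  have hmem0 : ∀ γ : ℝ, (0:ℝ) ∈ S γ := fun γ => ⟨0, le_rfl, by simp [h0]⟩
  have hSne : ∀ γ, (S γ).Nonempty := fun γ => ⟨0, hmem0 γ⟩
  have hSbdd : ∀ γ ≥ (0:ℝ), BddAbove (S γ) := by
    intro γ hγ
    refine ⟨M, ?_⟩
    rintro z ⟨ε', hε', rfl⟩
    have h1 := hM ε' hε'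
    have h2 : 0 ≤ ε' * γ := mul_nonneg hε' hγ
    linarith
  have hgle : ∀ γ ≥ (0:ℝ), ∀ ε' ≥ (0:ℝ), Φ ε' - ε' * γ ≤ g γ := fun γ hγ ε' hε' =>
    le_csSup (hSbdd γ hγ) ⟨ε', hε', rfl⟩
  have hg0 : ∀ γ ≥ (0:ℝ), 0 ≤ g γ := fun γ hγ => le_csSup (hSbdd γ hγ) (hmem0 γ)
  set T : ℝ → Set ℝ := fun x => {y : ℝ | ∃ γ ≥ (0:ℝ), y = x * γ + g γ} with hT
  have hΦt' : ∀ x, Φt x = sInf (T x) := hΦt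
  have hTne : ∀ x, (T x).Nonempty := fun x => ⟨x * 0 + g 0, 0, le_rfl, rfl⟩
  have hTbdd : ∀ x ≥ (0:ℝ), BddBelow (T x) := by
    intro x hx
    refine ⟨0, ?_⟩
    rintro y ⟨γ, hγ, rfl⟩
    have h1 := hg0 γ hγ
    have h2 : 0 ≤ x * γ := mul_nonneg hx hγ
    linarith
  have hle : ∀ x ≥ (0:ℝ), ∀ γ ≥ (0:ℝ), Φt x ≤ x * γ + g γ := by
    intro x hx γ hγ
    rw [hΦt' x]
    exact csInf_le (hTbdd x hx) ⟨γ, hγ, rfl⟩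
  refine ⟨⟨convex_Ici 0, ?_⟩, ?_, ?_⟩
  · intro x hx y hy a b ha hb hab
    rw [hΦt' (a • x + b • y)]
    apply le_csInf (hTne _)
    rintro c ⟨γ, hγ, rfl⟩
    have h1 := hle x hx γ hγ
    have h2 := hle y hy γ hγ
    simp only [smul_eq_mul]
    have habg : a * g γ + b * g γ = g γ := by rw [← add_mul, hab, one_mul]
    nlinarith [mul_le_mul_of_nonneg_left h1 ha, mul_le_mul_of_nonneg_left h2 hb, habg]
  · intro x hx
    rw [hΦt' x]
    apply le_csInf (hTne x)
    rintro y ⟨γ, hγ, rfl⟩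
    have := hgle γ hγ x hx
    linarith
  · have hge : 0 ≤ Φt 0 := by
      rw [hΦt' 0]
      apply le_csInf (hTne 0)
      rintro y ⟨γ, hγ, rfl⟩
      have := hg0 γ hγ
      linarith
    have hle0 : Φt 0 ≤ 0 := by
      apply le_of_forall_pos_le_add
      intro δ hδ
      obtain ⟨r, hr, hball⟩ := Metric.tendsto_nhdsWithin_nhds.mp hlim δ hδ
      have hγ0 : (0:ℝ) ≤ M / r := div_nonneg hM0 hr.le
      have hgδ : g (M / r) ≤ δ := by
        apply csSup_le (hSne _)
        rintro z ⟨ε', hε', rfl⟩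
        rcases eq_or_lt_of_le hε' with h | h
        · simp [← h, h0]; linarith
        rcases lt_or_ge ε' r with h' | h'
        · have := hball (mem_Ioi.mpr h) (by simpa [abs_of_pos h] using h')
          rw [Real.dist_eq, sub_zero] at this
          have h1 : Φ ε' < δ := lt_of_abs_lt this
          have h2 : 0 ≤ ε' * (M / r) := mul_nonneg hε'.le hγ0
          linarith
        · have h1 := hM ε' hε'
          have h2 : M ≤ ε' * (M / r) := by
            rw [mul_div_assoc']
            rw [le_div_iff₀ hr]
            nlinarith
          linarith
      have := hle 0 le_rfl (M / r) hγ0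
      linarith
    linarith
end

section
/- Let (X, 𝒜, μ) be a measure space with μ a finite measure, let q_a < q_b be real numbers, let f : X → ℝ be integrable, and let q̄, q : X → ℝ be measurable with q_a ≤ q̄(x) ≤ q_b and q_a ≤ q(x) ≤ q_b for μ-a.e. x. Assume the sign condition: for μ-a.e. x, f(x) ≥ 0 if q̄(x) = q_a, f(x) ≤ 0 if q̄(x) = q_b, and f(x) = 0 if q_a < q̄(x) < q_b. Let Ψ : [0,∞) → [0,∞) be continuous, strictly monotonically increasing, with Ψ(0) = 0 and Ψ(ε) → ∞ as ε → ∞, let Ψ⁻¹ : [0,∞) → [0,∞) denote its inverse, and assume the structural condition (μ({x : |f(x)| ≤ ε})).toReal ≤ Ψ(ε) for all ε > 0. Then, writing N = ∫ |q − q̄| dμ, it holds ∫ f·(q − q̄) dμ ≥ (1/2) · Ψ⁻¹( N / (2·(q_b − q_a)) ) · N. -/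
open MeasureTheory Filter Set

/-! Under the sign condition `f (q - q̄) = |f| |q - q̄|` almost everywhere. Off the sublevel set
`{|f| ≤ ε}` this is at least `ε |q - q̄|`, while on it `|q - q̄| ≤ q_b - q_a` and its measure is at
most `Ψ ε`; hence `∫ f (q - q̄) ≥ ε (N - (q_b - q_a) Ψ ε)`, and `ε = Ψ⁻¹(N / (2 (q_b - q_a)))`
turns the right-hand side into `ε N / 2`. -/

theorem mul_sub_eq_abs_mul_abs_of_sign {a b y z w : ℝ} (hy : a ≤ y ∧ y ≤ b) (hz : a ≤ z ∧ z ≤ b)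
    (hw : (y = a → 0 ≤ w) ∧ (y = b → w ≤ 0) ∧ (a < y → y < b → w = 0)) :
    w * (z - y) = |w| * |z - y| := by
  obtain ⟨hwa, hwb, hwab⟩ := hw
  rcases hy.1.eq_or_lt with rfl | hay
  · rw [abs_of_nonneg (hwa rfl), abs_of_nonneg (by linarith)]
  rcases hy.2.eq_or_lt with rfl | hyb
  · rw [abs_of_nonpos (hwb rfl), abs_of_nonpos (by linarith), neg_mul_neg]
  · simp [hwab hay hyb]

theorem mul_integral_sub_measureReal_le_integral_mul {X : Type*} [MeasurableSpace X]
    {μ : Measure X} [IsFiniteMeasure μ] {g D : X → ℝ} {C ε : ℝ}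
    (hg : Integrable g μ) (hD : AEMeasurable D μ) (hg0 : ∀ᵐ x ∂μ, 0 ≤ g x)
    (hDC : ∀ᵐ x ∂μ, D x ∈ Icc 0 C) (hε : 0 ≤ ε) :
    ε * (∫ x, D x ∂μ - C * μ.real {x | g x ≤ ε}) ≤ ∫ x, g x * D x ∂μ := by
  set S := {x | g x ≤ ε}
  have hS : NullMeasurableSet S μ := nullMeasurableSet_le hg.aemeasurable aemeasurable_const
  have hDint : Integrable D μ := .of_mem_Icc 0 C hD hDC
  have hgD : Integrable (fun x => g x * D x) μ :=
    hg.mul_bdd hD.aestronglyMeasurable (c := C) <| hDC.mono fun x hx => by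
      rw [Real.norm_eq_abs, abs_of_nonneg hx.1]; exact hx.2
  have hind : Integrable (S.indicator fun _ => C) μ := (integrable_const C).indicator₀ hS
  have hpt : ∀ᵐ x ∂μ, ε * D x ≤ g x * D x + ε * S.indicator (fun _ => C) x := by
    filter_upwards [hg0, hDC] with x hgx hDx
    by_cases hx : x ∈ S
    · rw [indicator_of_mem hx]
      nlinarith [mul_nonneg hgx hDx.1, mul_le_mul_of_nonneg_left hDx.2 hε]
    · rw [indicator_of_notMem hx, mul_zero, add_zero]
      exact mul_le_mul_of_nonneg_right (le_of_lt (not_le.mp hx)) hDx.1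
  calc ε * (∫ x, D x ∂μ - C * μ.real S)
        = ∫ x, ε * D x ∂μ - ε * ∫ x, S.indicator (fun _ => C) x ∂μ := by
          rw [integral_const_mul, integral_indicator₀ hS, setIntegral_const, smul_eq_mul]; ring
    _ ≤ ∫ x, g x * D x ∂μ := by
          rw [sub_le_iff_le_add, ← integral_const_mul, ← integral_add hgD (hind.const_mul ε)]
          exact integral_mono_ae (hDint.const_mul ε) (hgD.add (hind.const_mul ε)) hpt

theorem growth_estimate_structural_general
    {X : Type*} [MeasurableSpace X] (μ : Measure X) [IsFiniteMeasure μ]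
    (qa qb : ℝ) (hqab : qa < qb)
    (f : X → ℝ) (hf : Integrable f μ)
    (qbar q : X → ℝ) (hqbar : Measurable qbar) (hq : Measurable q)
    (hqbar_mem : ∀ᵐ x ∂μ, qa ≤ qbar x ∧ qbar x ≤ qb)
    (hq_mem : ∀ᵐ x ∂μ, qa ≤ q x ∧ q x ≤ qb)
    (hsign : ∀ᵐ x ∂μ,
      (qbar x = qa → 0 ≤ f x) ∧
      (qbar x = qb → f x ≤ 0) ∧
      (qa < qbar x → qbar x < qb → f x = 0))
    (Ψ Ψinv : ℝ → ℝ)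
    (hΨinv : Set.InvOn Ψinv Ψ (Set.Ici 0) (Set.Ici 0))
    (hstruct : ∀ ε > (0 : ℝ), (μ {x | |f x| ≤ ε}).toReal ≤ Ψ ε) :
    (1 / 2) * Ψinv ((∫ x, |q x - qbar x| ∂μ) / (2 * (qb - qa)))
        * (∫ x, |q x - qbar x| ∂μ)
      ≤ ∫ x, f x * (q x - qbar x) ∂μ := by
  set N := ∫ x, |q x - qbar x| ∂μ
  set ε := Ψinv (N / (2 * (qb - qa)))
  have hC : 0 < qb - qa := sub_pos.mpr hqab
  have hN : 0 ≤ N := integral_nonneg fun x => abs_nonneg _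
  have hD : ∀ᵐ x ∂μ, |q x - qbar x| ∈ Icc 0 (qb - qa) := by
    filter_upwards [hqbar_mem, hq_mem] with x h₁ h₂
    exact ⟨abs_nonneg _, abs_sub_le_iff.mpr ⟨by linarith, by linarith⟩⟩
  rw [integral_congr_ae <| by
    filter_upwards [hqbar_mem, hq_mem, hsign] with x h₁ h₂ h₃
    exact mul_sub_eq_abs_mul_abs_of_sign h₁ h₂ h₃]
  rcases le_or_gt ε 0 with hε | hε
  · exact (mul_nonpos_of_nonpos_of_nonneg (by linarith) hN).trans
      (integral_nonneg fun x => mul_nonneg (abs_nonneg _) (abs_nonneg _))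
  have hΨε : Ψ ε = N / (2 * (qb - qa)) := hΨinv.2 (div_nonneg hN (by positivity))
  calc 1 / 2 * ε * N = ε * (N - (qb - qa) * Ψ ε) := by rw [hΨε]; field_simp; ring
    _ ≤ ε * (N - (qb - qa) * μ.real {x | |f x| ≤ ε}) := by
        gcongr; exact hstruct ε hε
    _ ≤ ∫ x, |f x| * |q x - qbar x| ∂μ :=
        mul_integral_sub_measureReal_le_integral_mul hf.abs (hq.sub hqbar).abs.aemeasurable
          (.of_forall fun x => abs_nonneg _) hD hε.le

/-- Proposition 3.6 (measure-theoretic form): under the first-order sign condition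
and the structural condition `μ {|f| ≤ ε} ≤ Ψ ε`, the growth estimate
`∫ f (q − q̄) ≥ (1/2) Ψ⁻¹(N / (2 (q_b − q_a))) · N` holds, where
`N = ∫ |q − q̄|`. -/
theorem growth_estimate_structural
    {X : Type*} [MeasurableSpace X] (μ : Measure X) [IsFiniteMeasure μ]
    (qa qb : ℝ) (hqab : qa < qb)
    (f : X → ℝ) (hf : Integrable f μ)
    (qbar q : X → ℝ) (hqbar : Measurable qbar) (hq : Measurable q)
    (hqbar_mem : ∀ᵐ x ∂μ, qa ≤ qbar x ∧ qbar x ≤ qb)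
    (hq_mem : ∀ᵐ x ∂μ, qa ≤ q x ∧ q x ≤ qb)
    (hsign : ∀ᵐ x ∂μ,
      (qbar x = qa → 0 ≤ f x) ∧
      (qbar x = qb → f x ≤ 0) ∧
      (qa < qbar x → qbar x < qb → f x = 0))
    (Ψ Ψinv : ℝ → ℝ)
    (hΨcont : ContinuousOn Ψ (Set.Ici 0))
    (hΨmono : StrictMonoOn Ψ (Set.Ici 0))
    (hΨmaps : Set.MapsTo Ψ (Set.Ici 0) (Set.Ici 0))
    (hΨ0 : Ψ 0 = 0)
    (hΨtop : Tendsto Ψ atTop atTop)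
    (hΨinv : Set.InvOn Ψinv Ψ (Set.Ici 0) (Set.Ici 0))
    (hΨinv_maps : Set.MapsTo Ψinv (Set.Ici 0) (Set.Ici 0))
    (hstruct : ∀ ε > (0 : ℝ), (μ {x | |f x| ≤ ε}).toReal ≤ Ψ ε) :
    (1 / 2) * Ψinv ((∫ x, |q x - qbar x| ∂μ) / (2 * (qb - qa)))
        * (∫ x, |q x - qbar x| ∂μ)
      ≤ ∫ x, f x * (q x - qbar x) ∂μ :=
  growth_estimate_structural_general μ qa qb hqab f hf qbar q hqbar hq hqbar_mem hq_mem hsign Ψ Ψinv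
    hΨinv hstruct
end

section
/- Let (X, 𝒜, μ) be a measure space with μ a finite measure, let q_a < q_b be real numbers, let f : X → ℝ be integrable, and let q̄, q : X → ℝ be measurable with q_a ≤ q̄(x) ≤ q_b and q_a ≤ q(x) ≤ q_b for μ-a.e. x. Assume the sign condition: for μ-a.e. x, f(x) ≥ 0 if q̄(x) = q_a, f(x) ≤ 0 if q̄(x) = q_b, and f(x) = 0 if q_a < q̄(x) < q_b. Let C > 0 and κ > 0 and assume (μ({x : |f(x)| ≤ ε})).toReal ≤ C·ε^κ for all ε > 0. Then, writing N = ∫ |q − q̄| dμ, it holds ∫ f·(q − q̄) dμ ≥ (1/2) · (2·C·(q_b − q_a))^(−1/κ) · N^(1 + 1/κ). -/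
/-!
Under the sign condition the integrand `f (q - q̄)` equals `|f| |q - q̄|`. For every level
`ε > 0`, the pointwise bound `ε |q - q̄| ≤ |f| |q - q̄| + ε (q_b - q_a) 𝟙{|f| ≤ ε}` integrates to
`ε N ≤ ∫ f (q - q̄) + ε (q_b - q_a) C ε^κ`. Choosing `ε = (N / (2 C (q_b - q_a)))^(1/κ)` makes the
error term equal to `ε N / 2`, and `ε N / 2` is the claimed lower bound.
-/

open MeasureTheory Set Real

theorem mul_sub_eq_abs_mul_abs_of_sign_s5 {a b s t y : ℝ} (hs : s ∈ Icc a b) (ht : t ∈ Icc a b)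
    (hsign : (s = a → 0 ≤ y) ∧ (s = b → y ≤ 0) ∧ (a < s → s < b → y = 0)) :
    y * (t - s) = |y| * |t - s| := by
  obtain ⟨hy_lower, hy_upper, hy_inner⟩ := hsign
  rcases hs.1.eq_or_lt with rfl | has
  · rw [abs_of_nonneg (hy_lower rfl), abs_of_nonneg (sub_nonneg.2 ht.1)]
  rcases hs.2.eq_or_lt with rfl | hsb
  · rw [abs_of_nonpos (hy_upper rfl), abs_of_nonpos (sub_nonpos.2 ht.2), neg_mul_neg]
  · simp [hy_inner has hsb]

section LevelSet

variable {X : Type*} [MeasurableSpace X] {μ : Measure X} [IsFiniteMeasure μ]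

theorem mul_integral_le_integral_abs_mul_add {f g : X → ℝ} {M ε : ℝ} (hf : Integrable f μ)
    (hg : AEStronglyMeasurable g μ) (hg_mem : ∀ᵐ x ∂μ, 0 ≤ g x ∧ g x ≤ M) (hε : 0 ≤ ε) :
    ε * ∫ x, g x ∂μ ≤ ∫ x, |f x| * g x ∂μ + ε * M * μ.real {x | |f x| ≤ ε} := by
  set S := {x | |f x| ≤ ε}
  have hS : NullMeasurableSet S μ :=
    hf.1.norm.nullMeasurableSet_le aestronglyMeasurable_const
  have hg_bound : ∀ᵐ x ∂μ, ‖g x‖ ≤ M := by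
    filter_upwards [hg_mem] with x hx
    rw [norm_of_nonneg hx.1]
    exact hx.2
  have hg_int : Integrable g μ := .of_bound hg M hg_bound
  have hfg_int : Integrable (fun x ↦ |f x| * g x) μ := by
    simpa only [mul_comm] using hf.abs.bdd_mul hg hg_bound
  have hind_int : Integrable (S.indicator fun _ ↦ ε * M) μ :=
    (integrable_const _).indicator₀ hS
  have hpointwise : ∀ᵐ x ∂μ, ε * g x ≤ |f x| * g x + S.indicator (fun _ ↦ ε * M) x := by
    filter_upwards [hg_mem] with x ⟨hg0, hgM⟩
    by_cases hx : x ∈ S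
    · rw [indicator_of_mem hx]
      nlinarith [abs_nonneg (f x)]
    · rw [indicator_of_notMem hx]
      have hεf : ε ≤ |f x| := (not_le.1 hx).le
      nlinarith
  calc ε * ∫ x, g x ∂μ = ∫ x, ε * g x ∂μ := (integral_const_mul ε g).symm
    _ ≤ ∫ x, |f x| * g x + S.indicator (fun _ ↦ ε * M) x ∂μ :=
      integral_mono_ae (hg_int.const_mul ε) (hfg_int.add hind_int) hpointwise
    _ = ∫ x, |f x| * g x ∂μ + ε * M * μ.real S := by
      rw [integral_add hfg_int hind_int, integral_indicator₀ hS, setIntegral_const, smul_eq_mul,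
        mul_comm (μ.real S)]

theorem rpow_growth_le_integral_abs_mul {f g : X → ℝ} {M C κ : ℝ} (hf : Integrable f μ)
    (hg : AEStronglyMeasurable g μ) (hg_mem : ∀ᵐ x ∂μ, 0 ≤ g x ∧ g x ≤ M) (hM : 0 < M)
    (hC : 0 < C) (hκ : 0 < κ) (hlevel : ∀ ε > 0, μ.real {x | |f x| ≤ ε} ≤ C * ε ^ κ) :
    1 / 2 * (2 * C * M) ^ (-1 / κ) * (∫ x, g x ∂μ) ^ (1 + 1 / κ) ≤ ∫ x, |f x| * g x ∂μ := by
  set N := ∫ x, g x ∂μ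
  have hN_nonneg : 0 ≤ N := integral_nonneg_of_ae <| hg_mem.mono fun _ hx ↦ hx.1
  have hfg_nonneg : 0 ≤ ∫ x, |f x| * g x ∂μ :=
    integral_nonneg_of_ae <| hg_mem.mono fun x hx ↦ mul_nonneg (abs_nonneg _) hx.1
  rcases hN_nonneg.eq_or_lt with hN | hN
  · rwa [← hN, zero_rpow (by positivity), mul_zero]
  set D := 2 * C * M
  have hD : 0 < D := by positivity
  set ε := (N / D) ^ (1 / κ)
  have hε : 0 < ε := by positivity
  have hεκ : ε ^ κ = N / D := by
    rw [← rpow_mul (by positivity), one_div_mul_cancel hκ.ne', rpow_one]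
  have hbound : 1 / 2 * D ^ (-1 / κ) * N ^ (1 + 1 / κ) = ε * N / 2 := by
    simp only [ε]
    rw [rpow_add hN, rpow_one, div_rpow hN.le hD.le, neg_div, rpow_neg hD.le]
    ring
  have herror : ε * M * (C * ε ^ κ) = ε * N / 2 := by
    rw [hεκ]
    simp only [D]
    field_simp
  have hlevel_ε := mul_le_mul_of_nonneg_left (hlevel ε hε) (by positivity : 0 ≤ ε * M)
  have hlower := mul_integral_le_integral_abs_mul_add hf hg hg_mem hε.le
  rw [hbound]
  linarith

end LevelSet

/-- Remark 3.10 / Proposition 3.6 with `Ψ(ε) = C ε^κ`: the growth estimate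
`∫ f (q − q̄) ≥ (1/2) (2 C (q_b − q_a))^(−1/κ) · N^(1 + 1/κ)` with
`N = ∫ |q − q̄|`. -/
theorem growth_estimate_power
    {X : Type*} [MeasurableSpace X] (μ : Measure X) [IsFiniteMeasure μ]
    (qa qb : ℝ) (hqab : qa < qb)
    (f : X → ℝ) (hf : Integrable f μ)
    (qbar q : X → ℝ) (hqbar : Measurable qbar) (hq : Measurable q)
    (hqbar_mem : ∀ᵐ x ∂μ, qa ≤ qbar x ∧ qbar x ≤ qb)
    (hq_mem : ∀ᵐ x ∂μ, qa ≤ q x ∧ q x ≤ qb)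
    (hsign : ∀ᵐ x ∂μ,
      (qbar x = qa → 0 ≤ f x) ∧
      (qbar x = qb → f x ≤ 0) ∧
      (qa < qbar x → qbar x < qb → f x = 0))
    (C κ : ℝ) (hC : 0 < C) (hκ : 0 < κ)
    (hstruct : ∀ ε > (0 : ℝ), (μ {x | |f x| ≤ ε}).toReal ≤ C * ε ^ κ) :
    (1 / 2) * (2 * C * (qb - qa)) ^ (-1 / κ)
        * (∫ x, |q x - qbar x| ∂μ) ^ (1 + 1 / κ)
      ≤ ∫ x, f x * (q x - qbar x) ∂μ := by
  have hdist_mem : ∀ᵐ x ∂μ, 0 ≤ |q x - qbar x| ∧ |q x - qbar x| ≤ qb - qa := by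
    filter_upwards [hqbar_mem, hq_mem] with x hqbar_x hq_x
    exact ⟨abs_nonneg _, abs_sub_le_iff.2 ⟨by linarith, by linarith⟩⟩
  have hintegrand : (fun x ↦ f x * (q x - qbar x)) =ᵐ[μ] fun x ↦ |f x| * |q x - qbar x| := by
    filter_upwards [hqbar_mem, hq_mem, hsign] with x hqbar_x hq_x hsign_x
    exact mul_sub_eq_abs_mul_abs_of_sign_s5 hqbar_x hq_x hsign_x
  rw [integral_congr_ae hintegrand]
  exact rpow_growth_le_integral_abs_mul hf (hq.sub hqbar).abs.aestronglyMeasurable hdist_mem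
    (sub_pos.2 hqab) hC hκ hstruct
end

section
/- Let ε > 0 and c₀ > 0, and let Ψ : [0,∞) → [0,∞) be concave on [0,∞), continuous, strictly monotonically increasing, with Ψ(0) = 0 and Ψ(t) → ∞ as t → ∞; let Ψ⁻¹ : [0,∞) → [0,∞) denote its inverse. Then there exists a convex function F : [0,∞) → [0,∞) with F(0) = 0 and F(y)/y → 0 as y → 0 within (0,∞), such that x·y ≤ ε·Ψ⁻¹(c₀·x²)·x² + F(y) for all x, y ≥ 0. -/
open Filter Set

/-- Proposition 3.9: a Fenchel–Young-type complement. For `ε, c₀ > 0` and a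
structural modulus `Ψ` with inverse `Ψ⁻¹`, there exists a convex function
`F : [0,∞) → [0,∞)` with `F 0 = 0` and `F(y)/y → 0` as `y → 0⁺` such that
`x y ≤ ε Ψ⁻¹(c₀ x²) x² + F(y)` for all `x, y ≥ 0`. -/
theorem fenchel_young_complement
    (ε c₀ : ℝ) (hε : 0 < ε) (hc₀ : 0 < c₀)
    (Ψ Ψinv : ℝ → ℝ)
    (hconc : ConcaveOn ℝ (Set.Ici 0) Ψ)
    (hcont : ContinuousOn Ψ (Set.Ici 0))
    (hmono : StrictMonoOn Ψ (Set.Ici 0))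
    (hmaps : Set.MapsTo Ψ (Set.Ici 0) (Set.Ici 0))
    (h0 : Ψ 0 = 0)
    (htop : Tendsto Ψ atTop atTop)
    (hinv : Set.InvOn Ψinv Ψ (Set.Ici 0) (Set.Ici 0))
    (hinv_maps : Set.MapsTo Ψinv (Set.Ici 0) (Set.Ici 0)) :
    ∃ F : ℝ → ℝ,
      ConvexOn ℝ (Set.Ici 0) F ∧
      (∀ y ≥ (0 : ℝ), 0 ≤ F y) ∧
      F 0 = 0 ∧
      Tendsto (fun y => F y / y) (nhdsWithin 0 (Set.Ioi 0)) (nhds 0) ∧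
      ∀ x ≥ (0 : ℝ), ∀ y ≥ (0 : ℝ),
        x * y ≤ ε * Ψinv (c₀ * x ^ 2) * x ^ 2 + F y := by
  -- basic facts about Ψinv
  have hinv_nonneg : ∀ s : ℝ, 0 ≤ s → 0 ≤ Ψinv s := fun s hs =>
    hinv_maps (Set.mem_Ici.mpr hs)
  have hΨinv : ∀ s : ℝ, 0 ≤ s → Ψ (Ψinv s) = s := fun s hs =>
    hinv.2 (Set.mem_Ici.mpr hs)
  have hinvΨ : ∀ a : ℝ, 0 ≤ a → Ψinv (Ψ a) = a := fun a ha =>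
    hinv.1 (Set.mem_Ici.mpr ha)
  have hinv_mono : ∀ s t : ℝ, 0 ≤ s → s ≤ t → Ψinv s ≤ Ψinv t := by
    intro s t hs hst
    by_contra h
    push_neg at h
    have ht : (0 : ℝ) ≤ t := hs.trans hst
    have := hmono (Set.mem_Ici.mpr (hinv_nonneg t ht))
      (Set.mem_Ici.mpr (hinv_nonneg s hs)) h
    rw [hΨinv s hs, hΨinv t ht] at this
    linarith
  have hinv_pos : ∀ s : ℝ, 0 < s → 0 < Ψinv s := by
    intro s hs
    rcases (hinv_nonneg s hs.le).lt_or_eq with h | h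
    · exact h
    · exfalso
      have := hΨinv s hs.le
      rw [← h, h0] at this
      linarith
  -- the function H
  set H : ℝ → ℝ := fun x => ε * Ψinv (c₀ * x ^ 2) * x ^ 2 with hHdef
  have hHnn : ∀ x : ℝ, 0 ≤ H x := by
    intro x
    exact mul_nonneg (mul_nonneg hε.le (hinv_nonneg _ (by positivity))) (sq_nonneg x)
  have hH0 : H 0 = 0 := by simp [hHdef]
  -- the set defining F
  set S : ℝ → Set ℝ := fun y => {z : ℝ | ∃ x : ℝ, 0 ≤ x ∧ z = x * y - H x}
    with hSdef
  have hSne : ∀ y : ℝ, (S y).Nonempty := by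
    intro y
    exact ⟨0 * y - H 0, 0, le_rfl, rfl⟩
  have hS0 : ∀ y : ℝ, (0 : ℝ) ∈ S y := by
    intro y
    refine ⟨0, le_rfl, ?_⟩
    rw [hH0]; ring
  -- lower bound for H on rays
  have hHlow : ∀ m x : ℝ, 0 ≤ m → m ≤ x → ε * Ψinv (c₀ * m ^ 2) * m * x ≤ H x := by
    intro m x hm hmx
    have h1 : Ψinv (c₀ * m ^ 2) ≤ Ψinv (c₀ * x ^ 2) := by
      apply hinv_mono _ _ (by positivity)
      nlinarith [mul_nonneg (sub_nonneg.mpr hmx) (by linarith : (0:ℝ) ≤ x + m)]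
    have h2 : 0 ≤ Ψinv (c₀ * m ^ 2) := hinv_nonneg _ (by positivity)
    have hx : 0 ≤ x := hm.trans hmx
    have : ε * Ψinv (c₀ * m ^ 2) * m * x ≤ ε * Ψinv (c₀ * x ^ 2) * x * x := by
      have key : Ψinv (c₀ * m ^ 2) * m ≤ Ψinv (c₀ * x ^ 2) * x :=
        mul_le_mul h1 hmx hm (hinv_nonneg _ (by positivity))
      have key3 := mul_le_mul_of_nonneg_left
        (mul_le_mul_of_nonneg_right key hx) hε.le
      linear_combination key3
    calc ε * Ψinv (c₀ * m ^ 2) * m * x ≤ ε * Ψinv (c₀ * x ^ 2) * x * x := this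
      _ = H x := by simp [hHdef]; ring
  -- bounded above
  have hbdd : ∀ y : ℝ, 0 ≤ y → ∃ X : ℝ, 1 ≤ X ∧ ∀ z ∈ S y, z ≤ X * y := by
    intro y hy
    set a : ℝ := y / ε with ha_def
    have ha : 0 ≤ a := div_nonneg hy hε.le
    set t : ℝ := Ψ a with ht_def
    have ht : 0 ≤ t := hmaps (Set.mem_Ici.mpr ha)
    set X : ℝ := max 1 (Real.sqrt (t / c₀)) with hX_def
    have hX1 : (1 : ℝ) ≤ X := le_max_left _ _
    have hXnn : (0 : ℝ) ≤ X := by linarith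
    have htX : t ≤ c₀ * X ^ 2 := by
      have h1 : Real.sqrt (t / c₀) ≤ X := le_max_right _ _
      have h2 : Real.sqrt (t / c₀) ^ 2 = t / c₀ := Real.sq_sqrt (by positivity)
      have h3 : Real.sqrt (t / c₀) ^ 2 ≤ X ^ 2 :=
        pow_le_pow_left₀ (Real.sqrt_nonneg _) h1 2
      rw [h2] at h3
      calc t = c₀ * (t / c₀) := by field_simp
        _ ≤ c₀ * X ^ 2 := by nlinarith
    have hXa : a ≤ Ψinv (c₀ * X ^ 2) := by
      have := hinv_mono t (c₀ * X ^ 2) ht htX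
      rwa [ht_def, hinvΨ a ha] at this
    have hXkey : ∀ x : ℝ, X ≤ x → y * x ≤ H x := by
      intro x hx
      have := hHlow X x hXnn hx
      have hxnn : 0 ≤ x := hXnn.trans hx
      have : y * x ≤ ε * Ψinv (c₀ * X ^ 2) * X * x := by
        have h4 : y = ε * a := by rw [ha_def]; field_simp
        have hpsinn : 0 ≤ Ψinv (c₀ * X ^ 2) := hinv_nonneg _ (by positivity)
        have e2 : ε * a * x ≤ ε * Ψinv (c₀ * X ^ 2) * x :=
          mul_le_mul_of_nonneg_right (mul_le_mul_of_nonneg_left hXa hε.le) hxnn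
        have e3 : ε * Ψinv (c₀ * X ^ 2) * x ≤ ε * Ψinv (c₀ * X ^ 2) * X * x :=
          mul_le_mul_of_nonneg_right
            (le_mul_of_one_le_right (mul_nonneg hε.le hpsinn) hX1) hxnn
        calc y * x = ε * a * x := by rw [h4]
          _ ≤ ε * Ψinv (c₀ * X ^ 2) * x := e2
          _ ≤ ε * Ψinv (c₀ * X ^ 2) * X * x := e3
      linarith [hHlow X x hXnn hx]
    exact ⟨X, hX1, by
      rintro z ⟨x, hx, rfl⟩
      rcases le_or_gt x X with h | h
      · have := hHnn x
        nlinarith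
      · have := hXkey x h.le
        nlinarith [mul_nonneg hXnn hy]⟩
  have hBdd : ∀ y : ℝ, 0 ≤ y → BddAbove (S y) := by
    intro y hy
    obtain ⟨X, _, hX⟩ := hbdd y hy
    exact ⟨X * y, fun z hz => hX z hz⟩
  -- define F
  set F : ℝ → ℝ := fun y => sSup (S y) with hFdef
  have hFnn : ∀ y : ℝ, 0 ≤ y → 0 ≤ F y := fun y hy =>
    le_csSup (hBdd y hy) (hS0 y)
  have hF0 : F 0 = 0 := by
    apply le_antisymm
    · apply csSup_le (hSne 0)
      rintro z ⟨x, hx, rfl⟩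
      have := hHnn x
      linarith
    · exact hFnn 0 le_rfl
  -- main inequality
  have hmain : ∀ x : ℝ, 0 ≤ x → ∀ y : ℝ, 0 ≤ y → x * y ≤ H x + F y := by
    intro x hx y hy
    have : x * y - H x ≤ F y := le_csSup (hBdd y hy) ⟨x, hx, rfl⟩
    linarith
  -- convexity
  have hconv : ConvexOn ℝ (Set.Ici 0) F := by
    refine ⟨convex_Ici 0, ?_⟩
    intro p hp q hq s t hs ht hst
    simp only [smul_eq_mul]
    apply csSup_le (hSne _)
    rintro z ⟨x, hx, rfl⟩
    have h1 : x * p - H x ≤ F p := le_csSup (hBdd p hp) ⟨x, hx, rfl⟩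
    have h2 : x * q - H x ≤ F q := le_csSup (hBdd q hq) ⟨x, hx, rfl⟩
    have : x * (s * p + t * q) - H x
        = s * (x * p - H x) + t * (x * q - H x) := by
      linear_combination H x * hst
    rw [this]
    have := mul_le_mul_of_nonneg_left h1 hs
    have := mul_le_mul_of_nonneg_left h2 ht
    linarith
  -- the limit
  have hlim : Tendsto (fun y => F y / y) (nhdsWithin 0 (Set.Ioi 0)) (nhds 0) := by
    rw [Metric.tendsto_nhdsWithin_nhds]
    intro δ hδ
    set d : ℝ := δ / 2 with hd_def
    have hd : 0 < d := half_pos hδ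
    set m : ℝ := ε * Ψinv (c₀ * d ^ 2) * d with hm_def
    have hm : 0 < m := by
      apply mul_pos (mul_pos hε (hinv_pos _ (by positivity))) hd
    refine ⟨m, hm, ?_⟩
    intro y hy hyd
    have hy' : 0 < y := hy
    have hym : y ≤ m := by
      rw [Real.dist_eq, sub_zero] at hyd
      calc y ≤ |y| := le_abs_self y
        _ ≤ m := hyd.le
    have hFle : F y ≤ d * y := by
      apply csSup_le (hSne y)
      rintro z ⟨x, hx, rfl⟩
      rcases le_or_gt x d with h | h
      · have := hHnn x
        nlinarith
      · have := hHlow d x hd.le h.le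
        have : y * x ≤ H x := by
          calc y * x ≤ m * x := by nlinarith
            _ = ε * Ψinv (c₀ * d ^ 2) * d * x := by rw [hm_def]
            _ ≤ H x := hHlow d x hd.le h.le
        nlinarith [mul_pos hd hy']
    have h1 : F y / y ≤ d := by
      rw [div_le_iff₀ hy']
      linarith
    have h2 : 0 ≤ F y / y := div_nonneg (hFnn y hy'.le) hy'.le
    rw [Real.dist_eq, sub_zero, abs_of_nonneg h2]
    linarith
  refine ⟨F, hconv, fun y hy => hFnn y hy, hF0, hlim, ?_⟩
  intro x hx y hy
  have := hmain x hx y hy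
  simpa [hHdef] using this
end
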